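/- For any string T of length n and any interval [p, q] with 1 ≤ p ≤ q ≤ n, the number of shortest unique palindromic substrings (SUPSs) of T for [p, q] is at most 4. -/

import Mathlib

/-- The substring T[i..j] of T (1-indexed, inclusive). -/
def sub (T : List Char) (i j : ℕ) : List Char := (T.drop (i-1)).take (j+1-i)

/-- A string is a palindrome if it equals its reversal. -/
def IsPal (w : List Char) : Prop := w.reverse = w

/-- p is a period of w: 0 < p ≤ |w| and w[k] = w[k+p] for all valid k (0-indexed). -/
def HasPeriod (w : List Char) (p : ℕ) : Prop :=
  0 < p ∧ p ≤ w.length ∧ ∀ k, k + p < w.length → w[k]? = w[k + p]?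

/-- u occurs in T at (1-indexed) position i. -/
def OccursAt (u T : List Char) (i : ℕ) : Prop :=
  1 ≤ i ∧ i + u.length - 1 ≤ T.length ∧ sub T i (i + u.length - 1) = u

/-- u is unique in T: nonempty and occurs at exactly one position. -/
def UniqueIn (u T : List Char) : Prop := u ≠ [] ∧ ∃! i, OccursAt u T i

/-- u occurs at least twice in T. -/
def OccursTwice (u T : List Char) : Prop := ∃ i j, i ≠ j ∧ OccursAt u T i ∧ OccursAt u T j

/-- T[i..j] is a (nonempty, in-bounds) palindromic substring of T. -/
def IsPalSub (T : List Char) (i j : ℕ) : Prop :=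
  1 ≤ i ∧ i ≤ j ∧ j ≤ T.length ∧ IsPal (sub T i j)

/-- T[i..j] is a shortest unique palindromic substring of T for the interval [p,q]. -/
def IsSUPS (T : List Char) (p q i j : ℕ) : Prop :=
  IsPalSub T i j ∧ UniqueIn (sub T i j) T ∧ i ≤ p ∧ q ≤ j ∧
  ∀ i' j', IsPalSub T i' j' → UniqueIn (sub T i' j') T → i' ≤ p → q ≤ j' →
    j + 1 - i ≤ j' + 1 - i'

/-- T[i..j] is a minimal unique palindromic substring of T. -/
def IsMUPS (T : List Char) (i j : ℕ) : Prop :=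
  IsPalSub T i j ∧ UniqueIn (sub T i j) T ∧ ¬ UniqueIn (sub T (i+1) (j-1)) T


lemma sub_get? (T : List Char) (i j k : ℕ) (h1 : 1 ≤ i) (hk : k < j+1-i) :
    (sub T i j)[k]? = T[i-1+k]? := by
  rw [sub, List.getElem?_take_of_lt hk, List.getElem?_drop]

lemma sub_length (T : List Char) (i j : ℕ) (h1 : 1 ≤ i) (hjn : j ≤ T.length) :
    (sub T i j).length = j+1-i := by
  simp [sub]; omega

/-- 0-indexed palindrome-at predicate. -/
def PalAt0 (T : List Char) (a ℓ : ℕ) : Prop :=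
  ∀ k1 k2, k1 + k2 + 1 = ℓ → T[a+k1]? = T[a+k2]?

lemma pal_of (T : List Char) (i j : ℕ) (h1 : 1 ≤ i) (hij : i ≤ j) (hjn : j ≤ T.length)
    (hp : IsPal (sub T i j)) : PalAt0 T (i-1) (j+1-i) := by
  intro k1 k2 hsum
  have hlen : (sub T i j).length = j+1-i := sub_length T i j h1 hjn
  have hk1 : k1 < j+1-i := by omega
  have hk2 : k2 < j+1-i := by omega
  have e1 : (sub T i j)[k1]? = T[i-1+k1]? := sub_get? T i j k1 h1 hk1
  have e2 : (sub T i j)[k2]? = T[i-1+k2]? := sub_get? T i j k2 h1 hk2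
  have e3 : (sub T i j).reverse[k1]? = (sub T i j)[(sub T i j).length - 1 - k1]? :=
    List.getElem?_reverse (by omega)
  rw [hp] at e3
  have e4 : (sub T i j).length - 1 - k1 = k2 := by omega
  rw [e4] at e3
  rw [← e1, ← e2, e3]

lemma mk_occ (T u : List Char) (ℓ a : ℕ) (h1 : 1 ≤ a) (hlen : u.length = ℓ) (hl : 0 < ℓ)
    (hbound : a - 1 + ℓ ≤ T.length)
    (hchar : ∀ k, k < ℓ → T[a-1+k]? = u[k]?) : OccursAt u T a := by
  refine ⟨h1, by omega, ?_⟩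
  have hslen : (sub T a (a + u.length - 1)).length = ℓ := by
    rw [sub_length T _ _ h1 (by omega)]; omega
  apply List.ext_getElem?
  intro n
  by_cases hn : n < ℓ
  · rw [sub_get? T _ _ n h1 (by omega), ← hchar n hn]
  · rw [List.getElem?_eq_none (by omega), List.getElem?_eq_none (by omega)]

lemma occ_self (T : List Char) (a ℓ : ℕ) (h1 : 1 ≤ a) (hl : 0 < ℓ)
    (hbound : a + ℓ - 1 ≤ T.length) : OccursAt (sub T a (a+ℓ-1)) T a := by
  have hlen : (sub T a (a+ℓ-1)).length = ℓ := by
    rw [sub_length T _ _ h1 (by omega)]; omega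
  refine ⟨h1, ?_, ?_⟩
  · rw [hlen]; omega
  · rw [hlen]

/-- Two distinct occurrences contradict uniqueness. -/
lemma not_unique_of_two (T u : List Char) (a b : ℕ) (hab : a ≠ b)
    (ha : OccursAt u T a) (hb : OccursAt u T b) (hu : UniqueIn u T) : False := by
  obtain ⟨-, w, -, hw⟩ := hu
  have := (hw a ha).trans (hw b hb).symm
  exact hab this

/-- T[t] = T[t+s] for all t with m ≤ t and t+s ≤ e (0-indexed, e inclusive). -/
def Shift (T : List Char) (m e s : ℕ) : Prop :=
  ∀ t, m ≤ t → t + s ≤ e → T[t]? = T[t + s]?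

/-- characters at positions congruent mod g (within [m,e]) agree. -/
def SS (T : List Char) (m e g : ℕ) : Prop :=
  ∀ t1 t2, m ≤ t1 → t1 ≤ t2 → t2 ≤ e → g ∣ t2 - t1 → T[t1]? = T[t2]?

lemma shift_SS (T : List Char) (m e p : ℕ) (hp : 0 < p) (h : Shift T m e p) :
    SS T m e p := by
  have key : ∀ c t1, m ≤ t1 → t1 + p * c ≤ e → T[t1]? = T[t1 + p * c]? := by
    intro c
    induction c with
    | zero => simp
    | succ n ih =>
      intro t1 h1 h2
      have e1 : T[t1]? = T[t1 + p]? := h t1 h1 (by nlinarith)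
      have e2 := ih (t1 + p) (by omega) (by push_cast; nlinarith)
      rw [e1, e2]; congr 1; ring
  intro t1 t2 h1 h12 h2 hdvd
  obtain ⟨c, hc⟩ := hdvd
  have ht2 : t2 = t1 + p * c := by omega
  rw [ht2]
  exact key c t1 h1 (by omega)

lemma fw (T : List Char) : ∀ n p q m e, p + q ≤ n → 0 < p → 0 < q →
    m + p + q ≤ e + 1 + Nat.gcd p q →
    Shift T m e p → Shift T m e q → SS T m e (Nat.gcd p q) := by
  intro n
  induction n with
  | zero => intro p q m e h hp hq _ _ _; simp at h; omega
  | succ n ih =>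
    have key : ∀ p q m e, 0 < p → 0 < q → p < q → p + q ≤ n + 1 →
        m + p + q ≤ e + 1 + Nat.gcd p q → Shift T m e p → Shift T m e q →
        SS T m e (Nat.gcd p q) := by
      intro p q m e hp hq hpq hn hbound hP hQ
      obtain ⟨q', rfl⟩ : ∃ q', q = q' + p := ⟨q - p, by omega⟩
      have hq' : 0 < q' := by omega
      have hgcd : Nat.gcd p (q' + p) = Nat.gcd p q' := Nat.gcd_add_self_right p q'
      rw [hgcd] at hbound ⊢
      set g := Nat.gcd p q' with hg
      have hgp : g ∣ p := Nat.gcd_dvd_left p q'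
      have hgq' : g ∣ q' := Nat.gcd_dvd_right p q'
      have hgpos : 0 < g := Nat.gcd_pos_of_pos_left q' hp
      have hgle : g ≤ p := Nat.le_of_dvd hp hgp
      have hgleq' : g ≤ q' := Nat.le_of_dvd hq' hgq'
      -- e ≥ m + p + q' - 1
      have he : m + p + q' ≤ e + 1 := by omega
      obtain ⟨e', rfl⟩ : ∃ e', e = e' + p := ⟨e - p, by omega⟩
      have hP' : Shift T m e' p := fun t ht hte => hP t ht (by omega)
      have hQ'' : Shift T m e' q' := by
        intro t ht hte
        have e1 : T[t]? = T[t + (q' + p)]? := hQ t ht (by omega)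
        have e2 : T[t + q']? = T[t + q' + p]? := hP (t + q') (by omega) (by omega)
        rw [e1, e2]; congr 1; ring
      have hSS' : SS T m e' g := by
        have := ih p q' m e' (by omega) hp hq' (by omega) hP' hQ''
        rwa [hg]
      -- extend from [m, e'] to [m, e'+p]
      intro t1 t2 h1 h12 h2 hdvd
      by_cases hc2 : t2 ≤ e'
      · exact hSS' t1 t2 h1 h12 hc2 hdvd
      · have ht2m : m + p ≤ t2 := by omega
        have step2 : T[t2 - p]? = T[t2]? := by
          have := hP (t2 - p) (by omega) (by omega)
          rwa [Nat.sub_add_cancel (by omega)] at this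
        by_cases hc1 : t1 ≤ t2 - p
        · have hd : g ∣ (t2 - p) - t1 := by
            have h3 : (t2 - p) - t1 = (t2 - t1) - p := by omega
            rw [h3]; exact Nat.dvd_sub hdvd hgp
          exact (hSS' t1 (t2 - p) h1 hc1 (by omega) hd).trans step2
        · by_cases hc1' : t1 ≤ e'
          · have hd : g ∣ t1 - (t2 - p) := by
              have h3 : t1 - (t2 - p) = p - (t2 - t1) := by omega
              rw [h3]; exact Nat.dvd_sub hgp hdvd
            exact ((hSS' (t2 - p) t1 (by omega) (by omega) hc1' hd).symm).trans step2
          · have step1 : T[t1 - p]? = T[t1]? := by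
              have := hP (t1 - p) (by omega) (by omega)
              rwa [Nat.sub_add_cancel (by omega)] at this
            have hd : g ∣ (t2 - p) - (t1 - p) := by
              have h3 : (t2 - p) - (t1 - p) = t2 - t1 := by omega
              rw [h3]; exact hdvd
            exact step1.symm.trans ((hSS' (t1 - p) (t2 - p) (by omega) (by omega)
              (by omega) hd).trans step2)
    intro p q m e hn hp hq hbound hP hQ
    rcases lt_trichotomy p q with h | h | h
    · exact key p q m e hp hq h hn hbound hP hQ
    · subst h
      rw [Nat.gcd_self]
      exact shift_SS T m e p hp hP
    · have := key q p m e hq hp h (by omega) (by rw [Nat.gcd_comm]; omega) hQ hP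
      rwa [Nat.gcd_comm]

lemma pal2_shift (T : List Char) (a d ℓ : ℕ) (hl : 0 < ℓ) (hd : d ≤ ℓ)
    (h1 : PalAt0 T a ℓ) (h2 : PalAt0 T (a+d) ℓ) :
    Shift T a (a + d + ℓ - 1) (2*d) := by
  intro t ht hte
  obtain ⟨k, rfl⟩ : ∃ k, t = a + k := ⟨t - a, by omega⟩
  obtain ⟨s, hs⟩ : ∃ s, ℓ = k + d + s + 1 := ⟨ℓ - k - d - 1, by omega⟩
  have e1 : T[a + k]? = T[a + (d + s)]? := h1 k (d+s) (by omega)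
  have e2 : T[a + d + s]? = T[a + d + (k + d)]? := h2 s (k+d) (by omega)
  have i1 : a + (d+s) = a + d + s := by omega
  have i2 : a + d + (k+d) = a + k + 2*d := by omega
  rw [i1] at e1; rw [i2] at e2; exact e1.trans e2

lemma triple (T : List Char) (ℓ a b c : ℕ)
    (ha : 1 ≤ a) (hab : a < b) (hbc : b < c) (hl : 0 < ℓ)
    (hcn : c + ℓ - 1 ≤ T.length)
    (pa : PalAt0 T (a-1) ℓ) (pb : PalAt0 T (b-1) ℓ) (pc : PalAt0 T (c-1) ℓ)
    (ua : UniqueIn (sub T a (a+ℓ-1)) T) (ub : UniqueIn (sub T b (b+ℓ-1)) T)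
    (hspan : 2*(c-a) < ℓ) : False := by
  obtain ⟨a0, rfl⟩ : ∃ a0, a = a0 + 1 := ⟨a-1, by omega⟩
  obtain ⟨g1, rfl⟩ : ∃ g1, b = a0 + 1 + g1 := ⟨b - (a0+1), by omega⟩
  obtain ⟨g2, rfl⟩ : ∃ g2, c = a0 + 1 + g1 + g2 := ⟨c - (a0+1+g1), by omega⟩
  have hg1 : 0 < g1 := by omega
  have hg2 : 0 < g2 := by omega
  have hsum : 2*(g1+g2) < ℓ := by omega
  have hn : a0 + g1 + g2 + ℓ ≤ T.length := by omega
  have pa' : PalAt0 T a0 ℓ := by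
    have h : a0+1-1 = a0 := by omega
    rwa [h] at pa
  have pb' : PalAt0 T (a0+g1) ℓ := by
    have h : a0+1+g1-1 = a0+g1 := by omega
    rwa [h] at pb
  have pc' : PalAt0 T (a0+g1+g2) ℓ := by
    have h : a0+1+g1+g2-1 = a0+g1+g2 := by omega
    rwa [h] at pc
  have shift1 : Shift T a0 (a0 + g1 + ℓ - 1) (2*g1) :=
    pal2_shift T a0 g1 ℓ hl (by omega) pa' pb'
  have shift2 : Shift T (a0+g1) (a0 + g1 + g2 + ℓ - 1) (2*g2) :=
    pal2_shift T (a0+g1) g2 ℓ hl (by omega) pb' pc'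
  set G := Nat.gcd g1 g2 with hG
  have hGg1 : G ∣ g1 := Nat.gcd_dvd_left g1 g2
  have hGg2 : G ∣ g2 := Nat.gcd_dvd_right g1 g2
  have hGpos : 0 < G := Nat.gcd_pos_of_pos_left g2 hg1
  have hGle1 : G ≤ g1 := Nat.le_of_dvd hg1 hGg1
  have hGle2 : G ≤ g2 := Nat.le_of_dvd hg2 hGg2
  have h2g : Nat.gcd (2*g1) (2*g2) = 2 * G := Nat.gcd_mul_left 2 g1 g2
  have hfw : SS T (a0+g1) (a0+g1+ℓ-1) (2*G) := by
    have hP : Shift T (a0+g1) (a0+g1+ℓ-1) (2*g1) := fun t ht hte => shift1 t (by omega) (by omega)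
    have hQ : Shift T (a0+g1) (a0+g1+ℓ-1) (2*g2) := fun t ht hte => shift2 t ht (by omega)
    have := fw T (2*g1+2*g2) (2*g1) (2*g2) (a0+g1) (a0+g1+ℓ-1) le_rfl (by omega) (by omega)
      (by rw [h2g]; omega) hP hQ
    rwa [h2g] at this
  --2*G divides 2*g1 and 2*g2
  have hd1 : (2*G) ∣ (2*g1) := mul_dvd_mul_left 2 hGg1
  have hd2 : (2*G) ∣ (2*g2) := mul_dvd_mul_left 2 hGg2
  by_cases hA : 2*G ≤ g2
  · -- Case A : second occurrence of u_b at b + 2*G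
    set u := sub T (a0+1+g1) (a0+1+g1+ℓ-1) with hu
    have hlenu : u.length = ℓ := by rw [hu, sub_length T _ _ (by omega) (by omega)]; omega
    have hug : ∀ k, k < ℓ → u[k]? = T[a0+g1+k]? := by
      intro k hk
      have h := sub_get? T (a0+1+g1) (a0+1+g1+ℓ-1) k (by omega) (by omega)
      have hidx : a0+1+g1-1+k = a0+g1+k := by omega
      rwa [hidx] at h
    have occ1 : OccursAt u T (a0+1+g1) := occ_self T (a0+1+g1) ℓ (by omega) hl (by omega)
    have occ2 : OccursAt u T (a0+1+g1+2*G) := by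
      apply mk_occ T u ℓ (a0+1+g1+2*G) (by omega) hlenu hl (by omega)
      intro k hk
      have hidx : a0+1+g1+2*G-1+k = a0+g1+(2*G+k) := by omega
      rw [hidx, hug k hk]
      by_cases hk2 : 2*G + k + 1 ≤ ℓ
      · have h := hfw (a0+g1+k) (a0+g1+k+2*G) (by omega) (by omega) (by omega)
          (by have hq : a0+g1+k+2*G - (a0+g1+k) = 2*G := by omega
              rw [hq])
        have hidx2 : a0+g1+k+2*G = a0+g1+(2*G+k) := by omega
        rw [hidx2] at h
        exact h.symm
      · have hk3 : 2*g2 ≤ 2*G + k := by omega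
        obtain ⟨w, hw⟩ : ∃ w, 2*G + k = 2*g2 + w := ⟨2*G+k-2*g2, by omega⟩
        have step : T[a0+g1+w]? = T[a0+g1+w+2*g2]? :=
          shift2 (a0+g1+w) (by omega) (by omega)
        have hidx2 : a0+g1+w+2*g2 = a0+g1+(2*G+k) := by omega
        rw [hidx2] at step
        have hss : T[a0+g1+w]? = T[a0+g1+k]? := by
          apply hfw (a0+g1+w) (a0+g1+k) (by omega) (by omega) (by omega)
          have hq : a0+g1+k - (a0+g1+w) = 2*g2 - 2*G := by omega
          rw [hq]; exact Nat.dvd_sub hd2 dvd_rfl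
        exact step.symm.trans hss
    exact not_unique_of_two T u (a0+1+g1+2*G) (a0+1+g1) (by omega) occ2 occ1 ub
  by_cases hB : 2*G ≤ g1
  · -- Case B : second occurrence of u_b at b - 2*G
    obtain ⟨w, hw⟩ : ∃ w, g1 = w + 2*G := ⟨g1 - 2*G, by omega⟩
    set u := sub T (a0+1+g1) (a0+1+g1+ℓ-1) with hu
    have hlenu : u.length = ℓ := by rw [hu, sub_length T _ _ (by omega) (by omega)]; omega
    have hug : ∀ k, k < ℓ → u[k]? = T[a0+g1+k]? := by
      intro k hk
      have h := sub_get? T (a0+1+g1) (a0+1+g1+ℓ-1) k (by omega) (by omega)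
      have hidx : a0+1+g1-1+k = a0+g1+k := by omega
      rwa [hidx] at h
    have occ1 : OccursAt u T (a0+1+g1) := occ_self T (a0+1+g1) ℓ (by omega) hl (by omega)
    have occ2 : OccursAt u T (a0+1+w) := by
      apply mk_occ T u ℓ (a0+1+w) (by omega) hlenu hl (by omega)
      intro k hk
      have hidx : a0+1+w-1+k = a0+w+k := by omega
      rw [hidx, hug k hk]
      by_cases hk2 : 2*G ≤ k
      · apply hfw (a0+w+k) (a0+g1+k) (by omega) (by omega) (by omega)
        have hq : a0+g1+k - (a0+w+k) = 2*G := by omega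
        rw [hq]
      · have step : T[a0+w+k]? = T[a0+w+k+2*g1]? :=
          shift1 (a0+w+k) (by omega) (by omega)
        have hss : T[a0+g1+k]? = T[a0+w+k+2*g1]? := by
          apply hfw (a0+g1+k) (a0+w+k+2*g1) (by omega) (by omega) (by omega)
          have hq : a0+w+k+2*g1 - (a0+g1+k) = 2*g1 - 2*G := by omega
          rw [hq]; exact Nat.dvd_sub hd1 dvd_rfl
        exact step.trans hss.symm
    exact not_unique_of_two T u (a0+1+w) (a0+1+g1) (by omega) occ2 occ1 ub
  -- Case C : g1 = g2 = G, second occurrence of u_a at a + 2*G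
  have e1 : g1 = G := by
    obtain ⟨k1, hk1⟩ := hGg1
    have h2 : k1 < 2 := by
      by_contra hc; push_neg at hc; nlinarith
    interval_cases k1 <;> omega
  have e2 : g2 = G := by
    obtain ⟨k2, hk2⟩ := hGg2
    have h2 : k2 < 2 := by
      by_contra hc; push_neg at hc; nlinarith
    interval_cases k2 <;> omega
  set u := sub T (a0+1) (a0+1+ℓ-1) with hu
  have hlenu : u.length = ℓ := by rw [hu, sub_length T _ _ (by omega) (by omega)]; omega
  have hug : ∀ k, k < ℓ → u[k]? = T[a0+k]? := by
    intro k hk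
    have h := sub_get? T (a0+1) (a0+1+ℓ-1) k (by omega) (by omega)
    have hidx : a0+1-1+k = a0+k := by omega
    rwa [hidx] at h
  have occ1 : OccursAt u T (a0+1) := occ_self T (a0+1) ℓ (by omega) hl (by omega)
  have occ2 : OccursAt u T (a0+1+2*G) := by
    apply mk_occ T u ℓ (a0+1+2*G) (by omega) hlenu hl (by omega)
    intro k hk
    have hidx : a0+1+2*G-1+k = a0+k+2*G := by omega
    rw [hidx, hug k hk]
    by_cases hk2 : k + G + 1 ≤ ℓ
    · have h := shift1 (a0+k) (by omega) (by omega)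
      have hi : a0+k+2*g1 = a0+k+2*G := by omega
      rw [hi] at h
      exact h.symm
    · have h := shift2 (a0+k) (by omega) (by omega)
      have hi : a0+k+2*g2 = a0+k+2*G := by omega
      rw [hi] at h
      exact h.symm
  exact not_unique_of_two T u (a0+1+2*G) (a0+1) (by omega) occ2 occ1 ua

lemma chain5 (I : Finset ℕ) (h : 5 ≤ I.card) :
    ∃ y0 y1 y2 y3 y4, y0 ∈ I ∧ y1 ∈ I ∧ y2 ∈ I ∧ y3 ∈ I ∧ y4 ∈ I ∧
      y0 < y1 ∧ y1 < y2 ∧ y2 < y3 ∧ y3 < y4 := by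
  have step : ∀ (J : Finset ℕ), 0 < J.card → ∃ y, y ∈ J ∧ ∀ z ∈ J.erase y, y < z := by
    intro J hJ
    refine ⟨J.min' (Finset.card_pos.mp hJ), J.min'_mem _, ?_⟩
    intro z hz
    have h1 := J.min'_le z (Finset.mem_of_mem_erase hz)
    have h2 := Finset.ne_of_mem_erase hz
    omega
  obtain ⟨y0, hm0, hlt0⟩ := step I (by omega)
  have hc1 : 4 ≤ (I.erase y0).card := by rw [Finset.card_erase_of_mem hm0]; omega
  obtain ⟨y1, hm1, hlt1⟩ := step (I.erase y0) (by omega)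
  have hc2 : 3 ≤ ((I.erase y0).erase y1).card := by rw [Finset.card_erase_of_mem hm1]; omega
  obtain ⟨y2, hm2, hlt2⟩ := step ((I.erase y0).erase y1) (by omega)
  have hc3 : 2 ≤ (((I.erase y0).erase y1).erase y2).card := by
    rw [Finset.card_erase_of_mem hm2]; omega
  obtain ⟨y3, hm3, hlt3⟩ := step (((I.erase y0).erase y1).erase y2) (by omega)
  have hc4 : 1 ≤ ((((I.erase y0).erase y1).erase y2).erase y3).card := by
    rw [Finset.card_erase_of_mem hm3]; omega
  obtain ⟨y4, hm4, hlt4⟩ := step ((((I.erase y0).erase y1).erase y2).erase y3) (by omega)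
  refine ⟨y0, y1, y2, y3, y4, hm0, ?_, ?_, ?_, ?_, hlt0 y1 hm1, hlt1 y2 hm2,
    hlt2 y3 hm3, hlt3 y4 hm4⟩
  · exact Finset.mem_of_mem_erase hm1
  · exact Finset.mem_of_mem_erase (Finset.mem_of_mem_erase hm2)
  · exact Finset.mem_of_mem_erase (Finset.mem_of_mem_erase (Finset.mem_of_mem_erase hm3))
  · exact Finset.mem_of_mem_erase (Finset.mem_of_mem_erase (Finset.mem_of_mem_erase
      (Finset.mem_of_mem_erase hm4)))

set_option maxHeartbeats 1000000 in
/-- Any interval has at most 4 SUPSs. -/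

theorem sups_at_most_four (T : List Char) (p q : ℕ)
    (hp : 1 ≤ p) (hpq : p ≤ q) (hq : q ≤ T.length)
    (s : Finset (ℕ × ℕ)) (hs : ∀ x ∈ s, IsSUPS T p q x.1 x.2) :
    s.card ≤ 4 := by
  by_contra hcard
  push_neg at hcard
  have hs5 : 5 ≤ s.card := hcard
  obtain ⟨z, hz⟩ := (Finset.card_pos (s := s)).mp (by omega)
  obtain ⟨⟨hz1, hz2, hz3, hz4⟩, hzu, hzp, hzq, hzmin⟩ := hs z hz
  set ℓ := z.2 + 1 - z.1 with hℓ
  have hl : 0 < ℓ := by omega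
  have hlen : ∀ x ∈ s, x.2 + 1 - x.1 = ℓ := by
    intro x hx
    obtain ⟨hx1, hxu, hxp, hxq, hxmin⟩ := hs x hx
    have h1 := hxmin z.1 z.2 ⟨hz1,hz2,hz3,hz4⟩ hzu hzp hzq
    have h2 := hzmin x.1 x.2 hx1 hxu hxp hxq
    omega
  have key : ∀ x ∈ s, 1 ≤ x.1 ∧ x.1 ≤ p ∧ q ≤ x.1 + ℓ - 1 ∧ x.1 + ℓ - 1 ≤ T.length ∧
      PalAt0 T (x.1 - 1) ℓ ∧ UniqueIn (sub T x.1 (x.1+ℓ-1)) T := by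
    intro x hx
    obtain ⟨⟨h1, h2, h3, h4⟩, hu, hp', hq', -⟩ := hs x hx
    have hlx := hlen x hx
    have hx2 : x.2 = x.1 + ℓ - 1 := by omega
    have hpal : PalAt0 T (x.1-1) ℓ := by
      have hpp := pal_of T x.1 x.2 h1 h2 h3 h4
      rwa [hlx] at hpp
    refine ⟨h1, hp', by omega, by omega, hpal, ?_⟩
    rw [← hx2]
    exact hu
  have hinj : Set.InjOn Prod.fst (s : Set (ℕ × ℕ)) := by
    intro x hx y hy hxy
    simp only [Finset.mem_coe] at hx hy
    have h1 := hlen x hx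
    have h2 := hlen y hy
    have hx12 : x.1 ≤ x.2 := (hs x hx).1.2.1
    have hy12 : y.1 ≤ y.2 := (hs y hy).1.2.1
    have h3 : x.2 = y.2 := by omega
    exact Prod.ext hxy h3
  set I := s.image Prod.fst with hI
  have hIcard : 5 ≤ I.card := by rw [hI, Finset.card_image_of_injOn hinj]; omega
  have fact : ∀ y ∈ I, 1 ≤ y ∧ y ≤ p ∧ q ≤ y + ℓ - 1 ∧ y + ℓ - 1 ≤ T.length ∧
      PalAt0 T (y-1) ℓ ∧ UniqueIn (sub T y (y+ℓ-1)) T := by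
    intro y hy
    obtain ⟨x, hx, rfl⟩ := Finset.mem_image.mp hy
    exact key x hx
  obtain ⟨y0, y1, y2, y3, y4, hm0, hm1, hm2, hm3, hm4, h01, h12, h23, h34⟩ :=
    chain5 I hIcard
  obtain ⟨f01, f02, f03, f04, f05, f06⟩ := fact y0 hm0
  obtain ⟨f11, f12, f13, f14, f15, f16⟩ := fact y1 hm1
  obtain ⟨f21, f22, f23, f24, f25, f26⟩ := fact y2 hm2
  obtain ⟨f31, f32, f33, f34, f35, f36⟩ := fact y3 hm3
  obtain ⟨f41, f42, f43, f44, f45, f46⟩ := fact y4 hm4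
  have t1 : ¬ (2*(y2 - y0) < ℓ) := fun hsp =>
    triple T ℓ y0 y1 y2 f01 h01 h12 hl f24 f05 f15 f25 f06 f16 hsp
  have t2 : ¬ (2*(y4 - y2) < ℓ) := fun hsp =>
    triple T ℓ y2 y3 y4 f21 h23 h34 hl f44 f25 f35 f45 f26 f36 hsp
  -- y4 ≤ p ≤ q ≤ y0 + ℓ - 1
  omega
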